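/- If a finite Wang set T admits a periodic tiling of the plane, then T admits a doubly periodic tiling: there exist a tiling f of ℤ² by T and positive integers h and v such that f(x+h, y) = f(x, y) and f(x, y+v) = f(x, y) for all (x, y) ∈ ℤ². -/

import Mathlib

structure WangTile (H V : Type*) where
  west : H
  east : H
  south : V
  north : V
deriving DecidableEq

def TilingOn {H V : Type*} (T : Set (WangTile H V)) (X : Set (ℤ × ℤ))
    (f : ℤ × ℤ → WangTile H V) : Prop :=
  (∀ p ∈ X, f p ∈ T) ∧
  (∀ x y : ℤ, (x, y) ∈ X → (x + 1, y) ∈ X →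
    (f (x, y)).east = (f (x + 1, y)).west) ∧
  (∀ x y : ℤ, (x, y) ∈ X → (x, y + 1) ∈ X →
    (f (x, y)).north = (f (x, y + 1)).south)

def Tiling {H V : Type*} (T : Set (WangTile H V)) (f : ℤ × ℤ → WangTile H V) : Prop :=
  TilingOn T Set.univ f

def TilesPlane {H V : Type*} (T : Set (WangTile H V)) : Prop :=
  ∃ f, Tiling T f

def PeriodicTiling {H V : Type*} (f : ℤ × ℤ → WangTile H V) : Prop :=
  ∃ u v : ℤ, (u, v) ≠ (0, 0) ∧ ∀ x y : ℤ, f (x + u, y + v) = f (x, y)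

def Aperiodic {H V : Type*} (T : Set (WangTile H V)) : Prop :=
  TilesPlane T ∧ ∀ f, Tiling T f → ¬ PeriodicTiling f

def MinimallyAperiodic {H V : Type*} (T : Set (WangTile H V)) : Prop :=
  Aperiodic T ∧ ∀ S : Set (WangTile H V), S ⊂ T → ¬ TilesPlane S

/-!
Suppose `f` has period `(u, v)` with `v > 0` (if `v = 0`, transpose). Then `f` is determined by its
columns of height `v`, read as a bi-infinite word over the finite alphabet `T^v`, and that word is
constrained only through windows of radius `|u| + 1`: neighbouring columns must match, and the cell
above the top of column `x` is the bottom of column `x - u`. By pigeonhole some block of the word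
of length `2(|u| + 1) + 1` repeats, so the word can be made periodic, with period `w` say, without
creating new windows. Rebuilding the plane from the periodic word, with the same shift `u` between
consecutive layers of height `v`, gives a tiling with periods `(w, 0)` and `(u, v)`, hence also
`(0, w v)`.
-/

def HasDoublyPeriodicTiling {H V : Type*} (T : Set (WangTile H V)) : Prop :=
  ∃ (f : ℤ × ℤ → WangTile H V) (h v : ℤ), Tiling T f ∧ 0 < h ∧ 0 < v ∧
    (∀ x y : ℤ, f (x + h, y) = f (x, y)) ∧ (∀ x y : ℤ, f (x, y + v) = f (x, y))

namespace WangTile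

variable {H V : Type*}

def transpose (t : WangTile H V) : WangTile V H := ⟨t.south, t.north, t.west, t.east⟩

theorem transpose_injective : Function.Injective (transpose : WangTile H V → WangTile V H) :=
  fun _ _ h => congrArg transpose h

end WangTile

section Transpose

variable {H V : Type*} {T : Set (WangTile H V)}

theorem Tiling.transpose {f : ℤ × ℤ → WangTile H V} (hf : Tiling T f) :
    Tiling (WangTile.transpose ⁻¹' T) fun p => (f p.swap).transpose :=
  ⟨fun _ _ => hf.1 _ trivial, fun x y _ _ => hf.2.2 y x trivial trivial,
    fun x y _ _ => hf.2.1 y x trivial trivial⟩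

theorem HasDoublyPeriodicTiling.of_transpose
    (h : HasDoublyPeriodicTiling (WangTile.transpose ⁻¹' T)) : HasDoublyPeriodicTiling T := by
  obtain ⟨g, a, b, hg, ha, hb, hga, hgb⟩ := h
  exact ⟨fun p => (g p.swap).transpose, b, a, hg.transpose, hb, ha,
    fun x y => congrArg _ (hgb y x), fun x y => congrArg _ (hga y x)⟩

end Transpose

section PeriodicWord

variable {α : Type*} {t : Set α}

theorem exists_repeated_block {c : ℤ → α} (ht : t.Finite) (hc : ∀ x, c x ∈ t) (K : ℕ) :
    ∃ a w : ℤ, K < w ∧ ∀ i : ℤ, i.natAbs ≤ K → c (a + i + w) = c (a + i) := by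
  -- Blocks start at multiples of `2 * K + 1`, so two of them lie more than `K` apart.
  obtain ⟨m₁, m₂, hlt, heq⟩ := Set.Finite.exists_lt_map_eq_of_forall_mem
    (t := {g | ∀ j, g j ∈ t})
    (f := fun (m : ℕ) (j : Fin (2 * K + 1)) => c ((2 * K + 1 : ℕ) * m + j))
    (fun m j => hc _) (Set.Finite.pi' fun _ => ht)
  refine ⟨(2 * K + 1 : ℕ) * m₁ + K, (2 * K + 1 : ℕ) * m₂ - (2 * K + 1 : ℕ) * m₁, ?_,
    fun i hi => ?_⟩
  · have : m₁ + 1 ≤ m₂ := hlt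
    push_cast
    nlinarith
  · convert (congrFun heq ⟨(i + K).toNat, by omega⟩).symm using 2 <;> push_cast <;> omega

theorem exists_periodic_of_forall_mem {c : ℤ → α} (ht : t.Finite) (hc : ∀ x, c x ∈ t)
    (K : ℕ) :
    ∃ w > 0, ∃ c' : ℤ → α, Function.Periodic c' w ∧
      ∀ x, ∃ x', ∀ i : ℤ, i.natAbs ≤ K → c' (x + i) = c (x' + i) := by
  obtain ⟨a, w, hKw, hrep⟩ := exists_repeated_block ht hc K
  have hw : 0 < w := by omega
  have hagree : ∀ r : ℤ, -K ≤ r → r < w + K → c (a + r % w) = c (a + r) := by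
    intro r hr₁ hr₂
    rcases lt_or_ge r 0 with hr | hr
    · rw [← Int.add_emod_right, Int.emod_eq_of_lt (by omega) (by omega), ← add_assoc,
        hrep r (by omega)]
    rcases lt_or_ge r w with hr' | hr'
    · rw [Int.emod_eq_of_lt hr hr']
    · rw [← Int.sub_emod_right, Int.emod_eq_of_lt (by omega) (by omega),
        ← hrep (r - w) (by omega), add_assoc, sub_add_cancel]
  refine ⟨w, hw, fun x => c (a + (x - a) % w), fun x => ?_, fun x => ⟨a + (x - a) % w, ?_⟩⟩
  · simp only [add_sub_right_comm, Int.add_emod_right]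
  · intro i hi
    dsimp only
    have := Int.emod_nonneg (x - a) hw.ne'
    have := Int.emod_lt_of_pos (x - a) hw
    rw [show x + i - a = x - a + i by ring, ← Int.emod_add_emod,
      hagree _ (by omega) (by omega), add_assoc]

end PeriodicWord

theorem Int.divModEquiv_symm_castSucc_add_one {n : ℕ} (q : ℤ) (j : Fin n) :
    (Int.divModEquiv (n + 1)).symm (q, j.castSucc) + 1 =
      (Int.divModEquiv (n + 1)).symm (q, j.succ) := by
  simp only [Int.divModEquiv_symm_apply, Fin.val_castSucc, Fin.val_succ]
  push_cast
  ring

theorem Int.divModEquiv_symm_last_add_one {n : ℕ} (q : ℤ) :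
    (Int.divModEquiv (n + 1)).symm (q, Fin.last n) + 1 =
      (Int.divModEquiv (n + 1)).symm (q + 1, 0) := by
  simp only [Int.divModEquiv_symm_apply, Fin.val_last, Fin.val_zero]
  push_cast
  ring

section Columns

variable {H V : Type*} {T : Set (WangTile H V)} {n : ℕ}

structure ColumnRule (T : Set (WangTile H V)) (a right above : Fin (n + 1) → WangTile H V) :
    Prop where
  mem : ∀ j, a j ∈ T
  east_eq_west : ∀ j, (a j).east = (right j).west
  north_eq_south : ∀ j : Fin n, (a j.castSucc).north = (a j.succ).south
  north_last_eq_south : (a (Fin.last n)).north = (above 0).south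

def IsColumnWord (T : Set (WangTile H V)) (u : ℤ) (c : ℤ → Fin (n + 1) → WangTile H V) :
    Prop :=
  ∀ x, ColumnRule T (c x) (c (x + 1)) (c (x - u))

theorem Tiling.isColumnWord {f : ℤ × ℤ → WangTile H V} (hf : Tiling T f) {u : ℤ}
    (hper : ∀ x y, f (x + u, y + (n + 1)) = f (x, y)) :
    IsColumnWord T u fun x (j : Fin (n + 1)) => f (x, j) := fun x =>
  { mem := fun _ => hf.1 _ trivial
    east_eq_west := fun _ => hf.2.1 _ _ trivial trivial
    north_eq_south := fun j => by simpa using hf.2.2 x j trivial trivial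
    north_last_eq_south := by
      have hwrap := hper (x - u) 0
      rw [sub_add_cancel, zero_add] at hwrap
      simpa [hwrap] using hf.2.2 x n trivial trivial }

theorem IsColumnWord.of_window {u : ℤ} {c c' : ℤ → Fin (n + 1) → WangTile H V}
    (hc : IsColumnWord T u c)
    (hwin : ∀ x, ∃ x', ∀ i : ℤ, i.natAbs ≤ u.natAbs + 1 → c' (x + i) = c (x' + i)) :
    IsColumnWord T u c' := by
  intro x
  obtain ⟨x', hx'⟩ := hwin x
  have h₀ : c' x = c x' := by simpa using hx' 0 (by omega)
  have h₁ : c' (x + 1) = c (x' + 1) := hx' 1 (by omega)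
  have hu : c' (x - u) = c (x' - u) := by simpa [← sub_eq_add_neg] using hx' (-u) (by omega)
  rw [h₀, h₁, hu]
  exact hc x'

/-- The plane filled by the columns of `c`, stacked in layers of height `n + 1`, each layer
shifted by `u` to the right of the one below. -/
def unfoldColumns (u : ℤ) (c : ℤ → Fin (n + 1) → WangTile H V) (p : ℤ × ℤ) :
    WangTile H V :=
  c (p.1 - (Int.divModEquiv (n + 1) p.2).1 * u) (Int.divModEquiv (n + 1) p.2).2

@[simp]
theorem unfoldColumns_apply_divModEquiv_symm (u : ℤ) (c : ℤ → Fin (n + 1) → WangTile H V)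
    (x q : ℤ) (r : Fin (n + 1)) :
    unfoldColumns u c (x, (Int.divModEquiv (n + 1)).symm (q, r)) = c (x - q * u) r := by
  simp only [unfoldColumns, Equiv.apply_symm_apply]

theorem IsColumnWord.tiling_unfoldColumns {u : ℤ} {c : ℤ → Fin (n + 1) → WangTile H V}
    (hc : IsColumnWord T u c) : Tiling T (unfoldColumns u c) := by
  refine ⟨fun ⟨x, y⟩ _ => ?_, fun x y _ _ => ?_, fun x y _ _ => ?_⟩ <;>
    obtain ⟨⟨q, r⟩, rfl⟩ := (Int.divModEquiv (n + 1)).symm.surjective y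
  · rw [unfoldColumns_apply_divModEquiv_symm]
    exact (hc _).mem r
  · rw [unfoldColumns_apply_divModEquiv_symm, unfoldColumns_apply_divModEquiv_symm,
      add_sub_right_comm]
    exact (hc _).east_eq_west r
  · rcases Fin.eq_castSucc_or_eq_last r with ⟨j, rfl⟩ | rfl
    · rw [Int.divModEquiv_symm_castSucc_add_one, unfoldColumns_apply_divModEquiv_symm,
        unfoldColumns_apply_divModEquiv_symm]
      exact (hc _).north_eq_south j
    · rw [Int.divModEquiv_symm_last_add_one, unfoldColumns_apply_divModEquiv_symm,
        unfoldColumns_apply_divModEquiv_symm, add_one_mul, ← sub_sub]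
      exact (hc _).north_last_eq_south

theorem unfoldColumns_add_fst {u w : ℤ} {c : ℤ → Fin (n + 1) → WangTile H V}
    (hc : Function.Periodic c w) (x y : ℤ) :
    unfoldColumns u c (x + w, y) = unfoldColumns u c (x, y) := by
  simp only [unfoldColumns, add_sub_right_comm x w, hc _]

theorem unfoldColumns_add_snd {u w : ℤ} {c : ℤ → Fin (n + 1) → WangTile H V}
    (hc : Function.Periodic c w) (x y : ℤ) :
    unfoldColumns u c (x, y + w * (n + 1)) = unfoldColumns u c (x, y) := by
  obtain ⟨⟨q, r⟩, rfl⟩ := (Int.divModEquiv (n + 1)).symm.surjective y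
  have hlayer : (Int.divModEquiv (n + 1)).symm (q, r) + w * (n + 1) =
      (Int.divModEquiv (n + 1)).symm (q + w, r) := by
    simp only [Int.divModEquiv_symm_apply]
    push_cast
    ring
  rw [hlayer, unfoldColumns_apply_divModEquiv_symm, unfoldColumns_apply_divModEquiv_symm, add_mul,
    ← sub_sub, mul_comm w]
  exact congrFun (hc.sub_int_mul_eq u) r

end Columns

section Periodic

variable {H V : Type*} {T : Set (WangTile H V)} {f : ℤ × ℤ → WangTile H V}

theorem Tiling.hasDoublyPeriodicTiling_of_period_natCast_add_one (hT : T.Finite)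
    (hf : Tiling T f) {u : ℤ} {n : ℕ} (hper : ∀ x y, f (x + u, y + (n + 1)) = f (x, y)) :
    HasDoublyPeriodicTiling T := by
  obtain ⟨w, hw, c, hc, hwin⟩ := exists_periodic_of_forall_mem
    (Set.Finite.pi' fun _ : Fin (n + 1) => hT) (c := fun x (j : Fin (n + 1)) => f (x, j))
    (fun _ _ => hf.1 _ trivial) (u.natAbs + 1)
  exact ⟨unfoldColumns u c, w, w * (n + 1),
    ((hf.isColumnWord hper).of_window hwin).tiling_unfoldColumns, hw, by positivity,
    unfoldColumns_add_fst hc, unfoldColumns_add_snd hc⟩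

theorem Tiling.hasDoublyPeriodicTiling_of_period (hT : T.Finite) (hf : Tiling T f) {u v : ℤ}
    (hv : v ≠ 0) (hper : ∀ x y, f (x + u, y + v) = f (x, y)) : HasDoublyPeriodicTiling T := by
  rcases hv.lt_or_gt with hv | hv
  · obtain ⟨n, hn⟩ : ∃ n : ℕ, (n : ℤ) + 1 = -v := ⟨(-v).toNat - 1, by omega⟩
    refine hf.hasDoublyPeriodicTiling_of_period_natCast_add_one hT (u := -u) (n := n)
      fun x y => ?_
    simpa [hn, ← sub_eq_add_neg] using (hper (x - u) (y - v)).symm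
  · obtain ⟨n, hn⟩ : ∃ n : ℕ, (n : ℤ) + 1 = v := ⟨v.toNat - 1, by omega⟩
    exact hf.hasDoublyPeriodicTiling_of_period_natCast_add_one hT (u := u) (n := n) (hn ▸ hper)

end Periodic

/-- If a finite Wang set `T` admits a periodic tiling of the plane, then it
admits a doubly periodic tiling, with a horizontal period `h > 0` and a vertical period
`v > 0`. -/
theorem doubly_periodic_of_periodic {H V : Type*} (T : Set (WangTile H V))
    (hT : T.Finite) (f : ℤ × ℤ → WangTile H V) (hf : Tiling T f)
    (hper : PeriodicTiling f) :
    ∃ (f' : ℤ × ℤ → WangTile H V) (h v : ℤ), Tiling T f' ∧ 0 < h ∧ 0 < v ∧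
      (∀ x y : ℤ, f' (x + h, y) = f' (x, y)) ∧
      (∀ x y : ℤ, f' (x, y + v) = f' (x, y)) := by
  obtain ⟨u, v, hne, hper⟩ := hper
  rcases eq_or_ne v 0 with rfl | hv
  · have hu : u ≠ 0 := fun hu => hne (by rw [hu])
    refine HasDoublyPeriodicTiling.of_transpose <| hf.transpose.hasDoublyPeriodicTiling_of_period
      (hT.preimage WangTile.transpose_injective.injOn) (u := 0) hu fun x y => ?_
    simpa using congrArg WangTile.transpose (hper y x)
  · exact hf.hasDoublyPeriodicTiling_of_period hT hv hper
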